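/- arXiv:2403.18472 — 4 statements merged into one kernel-verified Lean document; each statement's English description precedes it below -/
import Mathlib

section
/- Let H be a finite-dimensional real inner product space and A : H → H a self-adjoint positive-definite linear operator. For σ ≥ 1/2 and τ > 0, if y¹ satisfies (I + στA) y¹ = (I − (1−σ)τA) y⁰ (a homogeneous weighted two-level scheme step), then ‖y¹‖ ≤ ‖y⁰‖. -/
/-! With the weighted mean `m = σ y¹ + (1 - σ) y⁰`, the scheme reads `y¹ - y⁰ = -τ A m`, and
`‖y¹‖² - ‖y⁰‖² = 2⟪y¹ - y⁰, m⟫ - (2σ - 1)‖y¹ - y⁰‖² = -2τ⟪A m, m⟫ - (2σ - 1)‖y¹ - y⁰‖² ≤ 0`. -/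

open scoped RealInnerProductSpace

section WeightedScheme

variable {H : Type*}

theorem sub_eq_neg_smul_apply_weightedMean [AddCommGroup H] [Module ℝ H] (A : H →ₗ[ℝ] H)
    {σ τ : ℝ} {y0 y1 : H} (hscheme : y1 + (σ * τ) • A y1 = y0 - ((1 - σ) * τ) • A y0) :
    y1 - y0 = (-τ) • A (σ • y1 + (1 - σ) • y0) := by
  rw [map_add, map_smul, map_smul]
  linear_combination (norm := module) hscheme

variable [NormedAddCommGroup H] [InnerProductSpace ℝ H]

theorem norm_sq_sub_norm_sq_eq_inner_weightedMean (σ : ℝ) (x y : H) :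
    ‖x‖ ^ 2 - ‖y‖ ^ 2 =
      2 * ⟪x - y, σ • x + (1 - σ) • y⟫ - (2 * σ - 1) * ‖x - y‖ ^ 2 := by
  simp only [← real_inner_self_eq_norm_sq, inner_sub_left, inner_sub_right, inner_add_right,
    real_inner_smul_right, real_inner_comm x y]
  ring

theorem norm_le_of_inner_sub_weightedMean_nonpos {σ : ℝ} (hσ : 1 / 2 ≤ σ) {x y : H}
    (h : ⟪x - y, σ • x + (1 - σ) • y⟫ ≤ 0) : ‖x‖ ≤ ‖y‖ := by
  have hsq : ‖x‖ ^ 2 - ‖y‖ ^ 2 ≤ 0 := by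
    rw [norm_sq_sub_norm_sq_eq_inner_weightedMean σ]
    nlinarith [sq_nonneg ‖x - y‖]
  exact (sq_le_sq₀ (norm_nonneg x) (norm_nonneg y)).mp (by linarith)

end WeightedScheme

theorem stmt_0_general {H : Type*} [NormedAddCommGroup H] [InnerProductSpace ℝ H]
    (A : H →ₗ[ℝ] H)
    (hApos : ∀ u : H, u ≠ 0 → 0 < ⟪A u, u⟫)
    (σ τ : ℝ) (hσ : 1 / 2 ≤ σ) (hτ : 0 < τ) (y0 y1 : H)
    (hscheme : y1 + (σ * τ) • A y1 = y0 - ((1 - σ) * τ) • A y0) :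
    ‖y1‖ ≤ ‖y0‖ := by
  set m := σ • y1 + (1 - σ) • y0
  have hAm : 0 ≤ ⟪A m, m⟫ := by
    rcases eq_or_ne m 0 with hm | hm
    · simp [hm]
    · exact (hApos m hm).le
  apply norm_le_of_inner_sub_weightedMean_nonpos hσ
  rw [sub_eq_neg_smul_apply_weightedMean A hscheme, real_inner_smul_left]
  exact mul_nonpos_of_nonpos_of_nonneg (neg_nonpos.mpr hτ.le) hAm

theorem stmt_0 {H : Type*} [NormedAddCommGroup H] [InnerProductSpace ℝ H]
    [FiniteDimensional ℝ H] (A : H →ₗ[ℝ] H) (hA : A.IsSymmetric)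
    (hApos : ∀ u : H, u ≠ 0 → 0 < ⟪A u, u⟫)
    (σ τ : ℝ) (hσ : 1 / 2 ≤ σ) (hτ : 0 < τ) (y0 y1 : H)
    (hscheme : y1 + (σ * τ) • A y1 = y0 - ((1 - σ) * τ) • A y0) :
    ‖y1‖ ≤ ‖y0‖ :=
  stmt_0_general A hApos σ τ hσ hτ y0 y1 hscheme
end

section
/- Let H be a finite-dimensional real inner product space, A : H → H self-adjoint and positive-definite, σ ≥ 1/2, τ > 0, and f ∈ H. If y¹ satisfies (y¹ − y⁰)/τ + A(σ y¹ + (1−σ) y⁰) = f, then ‖y¹‖²_A ≤ ‖y⁰‖²_A + (τ/2)‖f‖², where ‖v‖²_A = ⟨A v, v⟩. -/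
open scoped RealInnerProductSpace
open Finset LinearMap

/-!
Test the scheme against `δ = y¹ - y⁰`. Splitting the weighted average as
`σ y¹ + (1 - σ) y⁰ = (y¹ + y⁰)/2 + (σ - 1/2) δ` and using the symmetry of `A` gives the energy identity
`‖δ‖²/τ + (‖y¹‖²_A - ‖y⁰‖²_A)/2 + (σ - 1/2) ⟨A δ, δ⟩ = ⟨f, δ⟩`.
For `σ ≥ 1/2` the third term is nonnegative, and Young's inequality
`⟨f, δ⟩ ≤ ‖δ‖²/τ + (τ/4) ‖f‖²` absorbs the first one.
-/

section

variable {H : Type*} [NormedAddCommGroup H] [InnerProductSpace ℝ H]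

theorem LinearMap.IsSymmetric.inner_map_add_sub {A : H →ₗ[ℝ] H} (hA : A.IsSymmetric) (x y : H) :
    ⟪A (x + y), x - y⟫ = ⟪A x, x⟫ - ⟪A y, y⟫ := by
  have hxy : ⟪A y, x⟫ = ⟪A x, y⟫ := by rw [hA y x, real_inner_comm]
  simp only [map_add, inner_add_left, inner_sub_right, hxy]
  ring

theorem real_inner_le_norm_sq_div_add_mul_norm_sq {τ : ℝ} (hτ : 0 < τ) (f d : H) :
    ⟪f, d⟫ ≤ ‖d‖ ^ 2 / τ + τ / 4 * ‖f‖ ^ 2 := by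
  have hsq : 0 ≤ (‖d‖ - τ / 2 * ‖f‖) ^ 2 / τ := div_nonneg (sq_nonneg _) hτ.le
  have hexpand : (‖d‖ - τ / 2 * ‖f‖) ^ 2 / τ = ‖d‖ ^ 2 / τ + τ / 4 * ‖f‖ ^ 2 - ‖f‖ * ‖d‖ := by
    field_simp
    ring
  linarith [real_inner_le_norm f d]

theorem theta_scheme_energy_identity {A : H →ₗ[ℝ] H} (hA : A.IsSymmetric) {σ τ : ℝ}
    (hτ : τ ≠ 0) {f y0 y1 : H}
    (hscheme : (1 / τ) • (y1 - y0) + A (σ • y1 + (1 - σ) • y0) = f) :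
    ‖y1 - y0‖ ^ 2 / τ + (⟪A y1, y1⟫ - ⟪A y0, y0⟫) / 2
      + (σ - 1 / 2) * ⟪A (y1 - y0), y1 - y0⟫ = ⟪f, y1 - y0⟫ := by
  have hsplit : σ • y1 + (1 - σ) • y0 = (1 / 2 : ℝ) • (y1 + y0) + (σ - 1 / 2) • (y1 - y0) := by
    module
  rw [← hscheme, hsplit, inner_add_left, real_inner_smul_left, real_inner_self_eq_norm_sq,
    map_add, map_smul, map_smul, inner_add_left, real_inner_smul_left, real_inner_smul_left,
    hA.inner_map_add_sub]
  field_simp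
  ring

end

theorem stmt_1_general {H : Type*} [NormedAddCommGroup H] [InnerProductSpace ℝ H]
    (A : H →ₗ[ℝ] H) (hA : A.IsSymmetric)
    (hApos : ∀ u : H, u ≠ 0 → 0 < ⟪A u, u⟫)
    (σ τ : ℝ) (hσ : 1 / 2 ≤ σ) (hτ : 0 < τ) (f y0 y1 : H)
    (hscheme : (1 / τ) • (y1 - y0) + A (σ • y1 + (1 - σ) • y0) = f) :
    ⟪A y1, y1⟫ ≤ ⟪A y0, y0⟫ + (τ / 2) * ‖f‖ ^ 2 := by
  have henergy := theta_scheme_energy_identity hA hτ.ne' hscheme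
  have hdissipation : 0 ≤ (σ - 1 / 2) * ⟪A (y1 - y0), y1 - y0⟫ := by
    refine mul_nonneg (by linarith) ?_
    rcases eq_or_ne (y1 - y0) 0 with h | h
    · simp [h]
    · exact (hApos _ h).le
  linarith [real_inner_le_norm_sq_div_add_mul_norm_sq hτ f (y1 - y0)]

theorem stmt_1 {H : Type*} [NormedAddCommGroup H] [InnerProductSpace ℝ H]
    [FiniteDimensional ℝ H] (A : H →ₗ[ℝ] H) (hA : A.IsSymmetric)
    (hApos : ∀ u : H, u ≠ 0 → 0 < ⟪A u, u⟫)
    (σ τ : ℝ) (hσ : 1 / 2 ≤ σ) (hτ : 0 < τ) (f y0 y1 : H)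
    (hscheme : (1 / τ) • (y1 - y0) + A (σ • y1 + (1 - σ) • y0) = f) :
    ⟪A y1, y1⟫ ≤ ⟪A y0, y0⟫ + (τ / 2) * ‖f‖ ^ 2 :=
  stmt_1_general A hA hApos σ τ hσ hτ f y0 y1 hscheme
end

section
/- Let H be a finite-dimensional real inner product space and A self-adjoint nonnegative, τ > 0, σ ≥ 1/2. Then the transition operator S = I − τ(I + στA)^{-1}A satisfies ‖S u‖ ≤ ‖u‖ for all u ∈ H. -/
/-!
Write `w = B u`, so that `u = w + στ A w` and, since `B` commutes with `A`,
`S u = w + (σ - 1)τ A w`. Expanding the squared norms,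
`‖w + t A w‖² - ‖w + s A w‖² = (t - s)(2⟪w, A w⟫ + (t + s)‖A w‖²)`,
which is nonnegative for `|s| ≤ t` because `A ≥ 0`; for `s = (σ - 1)τ`, `t = στ`
the condition `|s| ≤ t` is exactly `σ ≥ 1/2`.
-/

open scoped RealInnerProductSpace
open Finset LinearMap

theorem norm_add_smul_le_norm_add_smul {E : Type*} [NormedAddCommGroup E]
    [InnerProductSpace ℝ E] {x y : E} (hxy : 0 ≤ ⟪x, y⟫) {s t : ℝ} (hst : |s| ≤ t) :
    ‖x + s • y‖ ≤ ‖x + t • y‖ := by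
  have hdiff : ‖x + t • y‖ ^ 2 - ‖x + s • y‖ ^ 2 =
      (t - s) * (2 * ⟪x, y⟫ + (t + s) * ‖y‖ ^ 2) := by
    simp only [norm_add_sq_real, real_inner_smul_right, norm_smul, mul_pow, Real.norm_eq_abs,
      sq_abs]
    ring
  obtain ⟨hneg_t_le_s, hs_le_t⟩ := abs_le.mp hst
  have hgap : 0 ≤ (t - s) * (2 * ⟪x, y⟫ + (t + s) * ‖y‖ ^ 2) :=
    mul_nonneg (by linarith) (add_nonneg (by linarith) (mul_nonneg (by linarith) (sq_nonneg _)))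
  exact (sq_le_sq₀ (norm_nonneg _) (norm_nonneg _)).mp (by linarith)

section InverseOfIdAddSmul

variable {R M : Type*} [CommRing R] [AddCommGroup M] [Module R M] {A B : M →ₗ[R] M} {c : R}

theorem eq_add_smul_of_id_add_smul_comp_eq_id (h₁ : (LinearMap.id + c • A) ∘ₗ B = LinearMap.id)
    (u : M) : u = B u + c • A (B u) := by
  simpa using (LinearMap.congr_fun h₁ u).symm

theorem comp_comm_of_id_add_smul_inverse (h₁ : (LinearMap.id + c • A) ∘ₗ B = LinearMap.id)
    (h₂ : B ∘ₗ (LinearMap.id + c • A) = LinearMap.id) : B ∘ₗ A = A ∘ₗ B := by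
  let u : (Module.End R M)ˣ := ⟨1 + c • A, B, h₁, h₂⟩
  have hAu : Commute A (u : Module.End R M) :=
    (Commute.one_right A).add_right ((Commute.refl A).smul_right c)
  exact hAu.units_inv_right.eq.symm

theorem id_sub_smul_comp_apply_of_id_add_smul_inverse
    (h₁ : (LinearMap.id + c • A) ∘ₗ B = LinearMap.id)
    (h₂ : B ∘ₗ (LinearMap.id + c • A) = LinearMap.id) (τ : R) (u : M) :
    (LinearMap.id - τ • (B ∘ₗ A) : M →ₗ[R] M) u = B u + (c - τ) • A (B u) := by
  have hBA : B (A u) = A (B u) := LinearMap.congr_fun (comp_comm_of_id_add_smul_inverse h₁ h₂) u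
  simp only [LinearMap.sub_apply, LinearMap.id_apply, LinearMap.smul_apply, comp_apply, hBA]
  linear_combination (norm := module) eq_add_smul_of_id_add_smul_comp_eq_id h₁ u

end InverseOfIdAddSmul

theorem stmt_7_general {H : Type*} [NormedAddCommGroup H] [InnerProductSpace ℝ H]
    (A : H →ₗ[ℝ] H)
    (hApos : ∀ u : H, 0 ≤ ⟪A u, u⟫) (σ τ : ℝ) (hσ : 1 / 2 ≤ σ) (hτ : 0 < τ)
    (B : H →ₗ[ℝ] H)
    (hB₁ : (LinearMap.id + (σ * τ) • A) ∘ₗ B = LinearMap.id)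
    (hB₂ : B ∘ₗ (LinearMap.id + (σ * τ) • A) = LinearMap.id) :
    ∀ u : H, ‖(LinearMap.id - τ • (B ∘ₗ A) : H →ₗ[ℝ] H) u‖ ≤ ‖u‖ := by
  intro u
  have hcoeff : |σ * τ - τ| ≤ σ * τ := abs_le.mpr ⟨by nlinarith, by linarith⟩
  calc ‖(LinearMap.id - τ • (B ∘ₗ A) : H →ₗ[ℝ] H) u‖
      = ‖B u + (σ * τ - τ) • A (B u)‖ := by
        rw [id_sub_smul_comp_apply_of_id_add_smul_inverse hB₁ hB₂]
    _ ≤ ‖B u + (σ * τ) • A (B u)‖ :=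
        norm_add_smul_le_norm_add_smul (by rw [real_inner_comm]; exact hApos (B u)) hcoeff
    _ = ‖u‖ := by rw [← eq_add_smul_of_id_add_smul_comp_eq_id hB₁ u]

theorem stmt_7 {H : Type*} [NormedAddCommGroup H] [InnerProductSpace ℝ H]
    [FiniteDimensional ℝ H] (A : H →ₗ[ℝ] H) (hA : A.IsSymmetric)
    (hApos : ∀ u : H, 0 ≤ ⟪A u, u⟫) (σ τ : ℝ) (hσ : 1 / 2 ≤ σ) (hτ : 0 < τ)
    (B : H →ₗ[ℝ] H)
    (hB₁ : (LinearMap.id + (σ * τ) • A) ∘ₗ B = LinearMap.id)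
    (hB₂ : B ∘ₗ (LinearMap.id + (σ * τ) • A) = LinearMap.id) :
    ∀ u : H, ‖(LinearMap.id - τ • (B ∘ₗ A) : H →ₗ[ℝ] H) u‖ ≤ ‖u‖ :=
  stmt_7_general A hApos σ τ hσ hτ B hB₁ hB₂
end

section
/- Let H be a finite-dimensional real inner product space, p ≥ 1, and A₁,…,A_p self-adjoint nonnegative operators on H with A = ∑_α A_α self-adjoint positive-definite. Suppose σ ≥ p/2 and τ > 0. If for each α, y_α¹ satisfies (y_α¹ − y⁰)/(pτ) + (I + στA_α)^{-1} A_α y⁰ = 0 and y¹ = (1/p)∑_{α=1}^p y_α¹, then ‖y_α¹‖ ≤ ‖y⁰‖ for each α, and hence ‖y¹‖ ≤ ‖y⁰‖. -/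
open scoped RealInnerProductSpace
open Finset LinearMap

/-! Each auxiliary problem gives `y₁ = y₀ - pτ w` with `w = (I + στA)⁻¹ A y₀`. Writing
`y₀ = v + στ w`, one has `A v = w`, so `⟪y₀, w⟫ = ⟪A v, v⟫ + στ ‖w‖² ≥ στ ‖w‖²` and
`‖y₁‖² ≤ ‖y₀‖² - pτ (2σ - p) τ ‖w‖² ≤ ‖y₀‖²`. The average of the `y₁` stays in the ball of
radius `‖y₀‖`. -/

section Resolvent

variable {H : Type*} [NormedAddCommGroup H] [InnerProductSpace ℝ H]

theorem mul_norm_sq_le_inner_resolvent_apply {T B : H →ₗ[ℝ] H} (hT : ∀ u, 0 ≤ ⟪T u, u⟫)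
    {θ : ℝ} (hB : (LinearMap.id + θ • T) ∘ₗ B = LinearMap.id) (y : H) :
    θ * ‖B (T y)‖ ^ 2 ≤ ⟪y, B (T y)⟫ := by
  set w := B (T y)
  have hTy : T y = w + θ • T w := by
    simpa using (LinearMap.congr_fun hB (T y)).symm
  have hTv : T (y - θ • w) = w := by
    rw [map_sub, map_smul, hTy, add_sub_cancel_right]
  have hsplit : ⟪y, w⟫ = ⟪T (y - θ • w), y - θ • w⟫ + θ * ‖w‖ ^ 2 := by
    rw [hTv, inner_sub_right, real_inner_smul_right, real_inner_self_eq_norm_sq,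
      real_inner_comm]
    ring
  linarith [hT (y - θ • w)]

theorem norm_sub_smul_resolvent_apply_le {T B : H →ₗ[ℝ] H} (hT : ∀ u, 0 ≤ ⟪T u, u⟫)
    {θ c : ℝ} (hB : (LinearMap.id + θ • T) ∘ₗ B = LinearMap.id) (hc₀ : 0 ≤ c)
    (hc : c ≤ 2 * θ) (y : H) :
    ‖y - c • B (T y)‖ ≤ ‖y‖ := by
  have hw := mul_norm_sq_le_inner_resolvent_apply hT hB y
  have hsq : ‖y - c • B (T y)‖ ^ 2 ≤ ‖y‖ ^ 2 := by
    rw [norm_sub_sq_real, real_inner_smul_right, norm_smul, Real.norm_of_nonneg hc₀]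
    nlinarith [mul_nonneg hc₀ (mul_nonneg (sub_nonneg.2 hc) (sq_nonneg ‖B (T y)‖))]
  exact (sq_le_sq₀ (norm_nonneg _) (norm_nonneg _)).1 hsq

end Resolvent

theorem norm_inv_card_smul_sum_le {E ι : Type*} [SeminormedAddCommGroup E] [NormedSpace ℝ E]
    [Fintype ι] {f : ι → E} {r : ℝ} (hr : 0 ≤ r) (hf : ∀ i, ‖f i‖ ≤ r) :
    ‖(Fintype.card ι : ℝ)⁻¹ • ∑ i, f i‖ ≤ r := by
  calc ‖(Fintype.card ι : ℝ)⁻¹ • ∑ i, f i‖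
      ≤ (Fintype.card ι : ℝ)⁻¹ * (Fintype.card ι * r) := by
        rw [norm_smul, norm_inv, Real.norm_natCast]
        gcongr
        simpa using norm_sum_le_of_le univ fun i _ => hf i
    _ ≤ r := by
        rw [← mul_assoc]
        exact mul_le_of_le_one_left hr (inv_mul_le_one_of_le₀ le_rfl (Nat.cast_nonneg _))

theorem eq_sub_smul_of_one_div_smul_sub_add_eq_zero {E : Type*} [AddCommGroup E] [Module ℝ E]
    {c : ℝ} (hc : c ≠ 0) {x y w : E} (h : (1 / c) • (x - y) + w = 0) : x = y - c • w := by
  have hw : w = -((1 / c) • (x - y)) := eq_neg_of_add_eq_zero_right h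
  rw [hw, smul_neg, smul_smul, mul_one_div_cancel hc, one_smul, sub_neg_eq_add, add_sub_cancel]

theorem stmt_8_general {H : Type*} [NormedAddCommGroup H] [InnerProductSpace ℝ H]
    (p : ℕ)
    (A : Fin p → (H →ₗ[ℝ] H))
    (hApos : ∀ α, ∀ u : H, 0 ≤ ⟪A α u, u⟫)
    (σ τ : ℝ) (hσ : (p : ℝ) / 2 ≤ σ) (hτ : 0 < τ)
    (B : Fin p → (H →ₗ[ℝ] H))
    (hB₁ : ∀ α, (LinearMap.id + (σ * τ) • A α) ∘ₗ B α = LinearMap.id)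
    (y0 : H) (y1 : Fin p → H)
    (hscheme : ∀ α, (1 / ((p : ℝ) * τ)) • (y1 α - y0) + B α (A α y0) = 0)
    (y1avg : H) (havg : y1avg = ((p : ℝ)⁻¹) • ∑ α, y1 α) :
    (∀ α, ‖y1 α‖ ≤ ‖y0‖) ∧ ‖y1avg‖ ≤ ‖y0‖ := by
  have hy1 : ∀ α, ‖y1 α‖ ≤ ‖y0‖ := by
    intro α
    have hp : (0 : ℝ) < p := Nat.cast_pos.2 α.pos
    rw [eq_sub_smul_of_one_div_smul_sub_add_eq_zero (by positivity) (hscheme α)]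
    exact norm_sub_smul_resolvent_apply_le (hApos α) (hB₁ α) (by positivity)
      (by nlinarith [mul_le_mul_of_nonneg_right hσ hτ.le]) y0
  refine ⟨hy1, ?_⟩
  simpa [havg] using norm_inv_card_smul_sum_le (norm_nonneg y0) hy1

theorem stmt_8 {H : Type*} [NormedAddCommGroup H] [InnerProductSpace ℝ H]
    [FiniteDimensional ℝ H] (p : ℕ) (hp : 1 ≤ p)
    (A : Fin p → (H →ₗ[ℝ] H)) (hAsym : ∀ α, (A α).IsSymmetric)
    (hApos : ∀ α, ∀ u : H, 0 ≤ ⟪A α u, u⟫)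
    (hsumpos : ∀ u : H, u ≠ 0 → 0 < ⟪(∑ α, A α) u, u⟫)
    (σ τ : ℝ) (hσ : (p : ℝ) / 2 ≤ σ) (hτ : 0 < τ)
    (B : Fin p → (H →ₗ[ℝ] H))
    (hB₁ : ∀ α, (LinearMap.id + (σ * τ) • A α) ∘ₗ B α = LinearMap.id)
    (hB₂ : ∀ α, B α ∘ₗ (LinearMap.id + (σ * τ) • A α) = LinearMap.id)
    (y0 : H) (y1 : Fin p → H)
    (hscheme : ∀ α, (1 / ((p : ℝ) * τ)) • (y1 α - y0) + B α (A α y0) = 0)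
    (y1avg : H) (havg : y1avg = ((p : ℝ)⁻¹) • ∑ α, y1 α) :
    (∀ α, ‖y1 α‖ ≤ ‖y0‖) ∧ ‖y1avg‖ ≤ ‖y0‖ :=
  stmt_8_general p A hApos σ τ hσ hτ B hB₁ y0 y1 hscheme y1avg havg
end
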